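/- Let K be a field and q ∈ K an element that is not a root of unity. Let M be the C(q)-module with K-basis {v_n : n ∈ ℕ} ∪ {w_n : n ∈ ℕ} and action a·v_0 = 0, a·v_n = ((qⁿ−1)/(q−1))·v_{n−1} for n ≥ 1, b·v_n = v_{n+1}, a·w_n = qⁿ(w_n + w_{n+1}), b·w_n = (q^{−n}/(1−q))·w_n + (−1)ⁿ v_0, and let V = span_K{v_n : n ∈ ℕ}. Then M is an essential extension of its submodule V, i.e., every nonzero C(q)-submodule of M intersects V nontrivially. -/

import Mathlib

noncomputable section

open FreeAlgebra

/-- Defining relation of the quantized Weyl algebra `C(q)`: `a * b = q • (b * a) + 1`,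
where `ι K 0` plays the role of `a` and `ι K 1` plays the role of `b`. -/
inductive QuantizedWeylRel (K : Type) [Field K] (q : K) :
    FreeAlgebra K (Fin 2) → FreeAlgebra K (Fin 2) → Prop
  | rel : QuantizedWeylRel K q (ι K (0 : Fin 2) * ι K (1 : Fin 2))
      (q • (ι K (1 : Fin 2) * ι K (0 : Fin 2)) + 1)

/-- The quantized Weyl algebra `C(q)`. -/
abbrev QuantizedWeyl (K : Type) [Field K] (q : K) : Type :=
  RingQuot (QuantizedWeylRel K q)

/-- The generator `a` of the quantized Weyl algebra. -/
def QuantizedWeyl.a (K : Type) [Field K] (q : K) : QuantizedWeyl K q :=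
  RingQuot.mkAlgHom K (QuantizedWeylRel K q) (ι K (0 : Fin 2))

/-- The generator `b` of the quantized Weyl algebra. -/
def QuantizedWeyl.b (K : Type) [Field K] (q : K) : QuantizedWeyl K q :=
  RingQuot.mkAlgHom K (QuantizedWeylRel K q) (ι K (1 : Fin 2))

/-!
The generator `b` acts on `M` as a shift on the `v_n` and, up to a multiple of `v_0`, diagonally on
the `w_n` with eigenvalues `λ_n = q⁻ⁿ / (1 - q)`, which are pairwise distinct because `q` is not a
root of unity. Hence `b` has no eigenvector: the shift forbids finitely supported eigenvectors in
`V`, and the `v_0`-component of `b w_n` forbids `w_n`. Starting from a nonzero `x ∈ N`, each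
`b - λ_n` with `w_n` in the support of `x` removes that `w_n` from the support while, being
injective, keeping the element nonzero; after finitely many steps we land in `V ∩ N`.
-/

open Module Function

theorem Finsupp.eq_zero_of_apply_eq_mul_apply_succ {R : Type*} [MulZeroClass R] {α : ℕ →₀ R}
    {c : R} (h : ∀ j, α j = c * α (j + 1)) : α = 0 := by
  by_contra hα
  have hne : α.support.Nonempty := Finsupp.support_nonempty_iff.mpr hα
  set j := α.support.max' hne
  have hj : α j ≠ 0 := Finsupp.mem_support_iff.mp (α.support.max'_mem hne)
  have hj1 : α (j + 1) = 0 := by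
    by_contra h1
    exact absurd (α.support.le_max' _ (Finsupp.mem_support_iff.mpr h1)) (by omega)
  exact hj (by rw [h j, hj1, mul_zero])

theorem injective_pow_of_pow_ne_one {K : Type*} [Field K] {q : K} (hq0 : q ≠ 0)
    (hq : ∀ k : ℕ, 0 < k → q ^ k ≠ 1) : Injective (q ^ · : ℕ → K) := by
  have hu : Injective fun n : ℕ => Units.mk0 q hq0 ^ n :=
    injective_pow_iff_not_isOfFinOrder.mpr fun h => by
      obtain ⟨k, hk, hk1⟩ := isOfFinOrder_iff_pow_eq_one.mp h
      exact hq k hk (by simpa using congrArg Units.val hk1)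
  intro m n h
  exact hu (Units.ext (by simpa using h))

section

variable {K M κ : Type*} [Field K] [AddCommGroup M] [Module K M]

theorem exists_ne_zero_mem_span_inl {ι : Type*} (b : Basis (ι ⊕ κ) K M) (f : Module.End K M)
    (μ : κ → K) (hf : ∀ z k, b.repr (f z) (.inr k) = μ k * b.repr z (.inr k))
    (hμ : ∀ k, f.eigenspace (μ k) = ⊥) (p : Submodule K M) (hp : ∀ z ∈ p, f z ∈ p)
    (hp0 : p ≠ ⊥) :
    ∃ y ∈ p, y ≠ 0 ∧ y ∈ Submodule.span K (Set.range (b ∘ Sum.inl)) := by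
  classical
  suffices h : ∀ (S : Finset κ) (x : M), x ∈ p → x ≠ 0 → (∀ k ∉ S, b.repr x (.inr k) = 0) →
      ∃ y ∈ p, y ≠ 0 ∧ ∀ k, b.repr y (.inr k) = 0 by
    obtain ⟨x, hxp, hx0⟩ := (Submodule.ne_bot_iff p).mp hp0
    obtain ⟨y, hyp, hy0, hy⟩ :=
      h ((b.repr x).support.preimage Sum.inr Sum.inr_injective.injOn) x hxp hx0
        (fun k hk => by simpa using hk)
    refine ⟨y, hyp, hy0, ?_⟩
    rw [Set.range_comp, b.mem_span_image]
    rintro (j | k) hi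
    · exact Set.mem_range_self j
    · exact absurd (hy k) (Finsupp.mem_support_iff.mp hi)
  intro S
  induction S using Finset.induction_on with
  | empty => exact fun x hxp hx0 hx => ⟨x, hxp, hx0, fun k => hx k (Finset.notMem_empty k)⟩
  | insert m S _ ih =>
    intro x hxp hx0 hx
    -- `f - μ m` kills the `m`-th `κ`-coordinate and, having trivial kernel, keeps `x` nonzero.
    refine ih (f x - μ m • x) (p.sub_mem (hp x hxp) (p.smul_mem _ hxp)) ?_ fun k hk => ?_
    · rw [sub_ne_zero]
      intro h
      exact hx0 (by simpa [hμ m] using (Module.End.mem_eigenspace_iff.mpr h))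
    · have hcoord : b.repr (f x - μ m • x) (.inr k) = (μ k - μ m) * b.repr x (.inr k) := by
        simp [hf, sub_mul]
      rw [hcoord]
      by_cases hkm : k = m
      · rw [hkm, sub_self, zero_mul]
      · rw [hx k (by simp [hkm, hk]), mul_zero]

structure IsShiftDiagonal (b : Basis (ℕ ⊕ κ) K M) (f : Module.End K M) (μ c : κ → K) : Prop where
  apply_inl : ∀ n, f (b (.inl n)) = b (.inl (n + 1))
  apply_inr : ∀ k, f (b (.inr k)) = μ k • b (.inr k) + c k • b (.inl 0)

namespace IsShiftDiagonal

variable {b : Basis (ℕ ⊕ κ) K M} {f : Module.End K M} {μ c : κ → K}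

theorem repr_apply_inl_succ (h : IsShiftDiagonal b f μ c) (z : M) (j : ℕ) :
    b.repr (f z) (.inl (j + 1)) = b.repr z (.inl j) := by
  suffices hcoord : b.coord (.inl (j + 1)) ∘ₗ f = b.coord (.inl j) from
    LinearMap.congr_fun hcoord z
  refine b.ext fun i => ?_
  rcases i with n | k
  · simp [h.apply_inl, Finsupp.single_apply_left Sum.inl_injective,
      Finsupp.single_apply_left (add_left_injective 1)]
  · simp [h.apply_inr]

theorem repr_apply_inr (h : IsShiftDiagonal b f μ c) (z : M) (k : κ) :
    b.repr (f z) (.inr k) = μ k * b.repr z (.inr k) := by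
  suffices hcoord : b.coord (.inr k) ∘ₗ f = μ k • b.coord (.inr k) from
    LinearMap.congr_fun hcoord z
  refine b.ext fun i => ?_
  rcases i with n | m
  · simp [h.apply_inl]
  · by_cases hmk : m = k
    · subst hmk; simp [h.apply_inr]
    · simp [h.apply_inr, hmk]

theorem eigenspace_eq_bot (h : IsShiftDiagonal b f μ c) (hμ : Injective μ) (hc : ∀ k, c k ≠ 0)
    (a : K) : f.eigenspace a = ⊥ := by
  refine eq_bot_iff.mpr fun x hx => (Submodule.mem_bot K).mpr ?_
  rw [Module.End.mem_eigenspace_iff] at hx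
  have hinl : ∀ j, b.repr x (.inl j) = 0 := by
    have hzero := Finsupp.eq_zero_of_apply_eq_mul_apply_succ (c := a)
      (α := (b.repr x).comapDomain Sum.inl Sum.inl_injective.injOn) fun j => by
        simpa [hx] using (h.repr_apply_inl_succ x j).symm
    exact fun j => by simpa using DFunLike.congr_fun hzero j
  have hinr : ∀ k, (μ k - a) * b.repr x (.inr k) = 0 := fun k => by
    rw [sub_mul, ← h.repr_apply_inr x k, hx, map_smul, Finsupp.smul_apply, smul_eq_mul,
      sub_self]
  by_contra hx0
  obtain ⟨m, hm⟩ : ∃ m, b.repr x (.inr m) ≠ 0 := by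
    by_contra! hall
    exact hx0 (b.repr.injective (Finsupp.ext fun i => by rcases i with j | k <;> simp [hinl, hall]))
  have ha : a = μ m := (sub_eq_zero.mp ((mul_eq_zero.mp (hinr m)).resolve_right hm)).symm
  have hxm : x = b.repr x (.inr m) • b (.inr m) := by
    refine b.repr.injective (Finsupp.ext fun i => ?_)
    rcases i with j | k
    · simp [hinl]
    · by_cases hkm : k = m
      · simp [hkm]
      · have : μ k - a ≠ 0 := by rw [ha, sub_ne_zero]; exact hμ.ne hkm
        simp [(mul_eq_zero.mp (hinr k)).resolve_left this, Ne.symm hkm]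
  -- `x` would be a multiple of `w_m`, but `f w_m` has the nonzero `v_0`-component `c m`.
  have hv0 := congrArg (b.repr · (.inl 0)) hx
  rw [hxm] at hv0
  simp [h.apply_inr, hc m, hm] at hv0

end IsShiftDiagonal

end

theorem quantizedWeyl_M_essential_extension_general (K : Type) [Field K] (q : K) (hq0 : q ≠ 0)
    (hq : ∀ k : ℕ, 0 < k → q ^ k ≠ 1)
    (M : Type) [AddCommGroup M] [Module K M] [Module (QuantizedWeyl K q) M]
    [IsScalarTower K (QuantizedWeyl K q) M]
    (bas : Module.Basis (ℕ ⊕ ℕ) K M)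
    (hbv : ∀ n : ℕ, QuantizedWeyl.b K q • bas (Sum.inl n) = bas (Sum.inl (n + 1)))
    (hbw : ∀ n : ℕ, QuantizedWeyl.b K q • bas (Sum.inr n) =
      ((q ^ n)⁻¹ / (1 - q)) • bas (Sum.inr n) + ((-1 : K) ^ n) • bas (Sum.inl 0))
    :
    ∀ N : Submodule (QuantizedWeyl K q) M, N ≠ ⊥ →
      ∃ x ∈ N, x ≠ 0 ∧
        x ∈ (Submodule.span K (Set.range fun n : ℕ => bas (Sum.inl n)) :
          Submodule K M) := by
  intro N hN
  have hq1 : (1 : K) - q ≠ 0 := sub_ne_zero.mpr fun h => hq 1 one_pos (by simp [← h])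
  set μ : ℕ → K := fun n => (q ^ n)⁻¹ / (1 - q)
  have hμ : Injective μ := fun m n h =>
    injective_pow_of_pow_ne_one hq0 hq (inv_injective ((div_left_inj' hq1).mp h))
  have hb : IsShiftDiagonal bas (DistribSMul.toLinearMap K M (QuantizedWeyl.b K q)) μ
      (fun n => (-1) ^ n) := ⟨hbv, hbw⟩
  have hc (n : ℕ) : (-1 : K) ^ n ≠ 0 := pow_ne_zero n (neg_ne_zero.mpr one_ne_zero)
  exact exists_ne_zero_mem_span_inl bas _ μ hb.repr_apply_inr
    (fun _ => hb.eigenspace_eq_bot hμ hc _)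
    (N.restrictScalars K) (fun z hz => N.smul_mem _ hz)
    (by rwa [ne_eq, Submodule.restrictScalars_eq_bot_iff])

/-- Let `M` be the `C(q)`-module (`q` not a root of unity) with `K`-basis
`{v_n} ∪ {w_n}` and action as in the paper, and let `V = span_K{v_n}`.  Then `M` is an
essential extension of `V`: every nonzero `C(q)`-submodule of `M` intersects `V`
nontrivially. -/
theorem quantizedWeyl_M_essential_extension (K : Type) [Field K] (q : K) (hq0 : q ≠ 0)
    (hq : ∀ k : ℕ, 0 < k → q ^ k ≠ 1)
    (M : Type) [AddCommGroup M] [Module K M] [Module (QuantizedWeyl K q) M]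
    [IsScalarTower K (QuantizedWeyl K q) M]
    (bas : Module.Basis (ℕ ⊕ ℕ) K M)
    (ha0 : QuantizedWeyl.a K q • bas (Sum.inl 0) = (0 : M))
    (hav : ∀ n : ℕ, QuantizedWeyl.a K q • bas (Sum.inl (n + 1)) =
      ((q ^ (n + 1) - 1) / (q - 1)) • bas (Sum.inl n))
    (hbv : ∀ n : ℕ, QuantizedWeyl.b K q • bas (Sum.inl n) = bas (Sum.inl (n + 1)))
    (haw : ∀ n : ℕ, QuantizedWeyl.a K q • bas (Sum.inr n) =
      q ^ n • (bas (Sum.inr n) + bas (Sum.inr (n + 1))))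
    (hbw : ∀ n : ℕ, QuantizedWeyl.b K q • bas (Sum.inr n) =
      ((q ^ n)⁻¹ / (1 - q)) • bas (Sum.inr n) + ((-1 : K) ^ n) • bas (Sum.inl 0))
    :
    ∀ N : Submodule (QuantizedWeyl K q) M, N ≠ ⊥ →
      ∃ x ∈ N, x ≠ 0 ∧
        x ∈ (Submodule.span K (Set.range fun n : ℕ => bas (Sum.inl n)) :
          Submodule K M) :=
  quantizedWeyl_M_essential_extension_general K q hq0 hq M bas hbv hbw

end
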